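/- arXiv:2104.10721 — 4 statements merged into one kernel-verified Lean document; each statement's English description precedes it below -/
import Mathlib

section
/- If a sequence of vectors d^0, d^1, d^2, ... in ℝ³ satisfies the implicit midpoint relation (d^{m+1} - d^m)/Δt = ((d^m + d^{m+1})/2) × w^{m+1/2} for all m (for some vectors w^{m+1/2} and Δt > 0), then |d^m| = |d^0| for all m. In particular, if |d^0| = 1 then |d^m| = 1 for all m. -/
open RealInnerProductSpace

noncomputable def cross3 (a b : EuclideanSpace ℝ (Fin 3)) : EuclideanSpace ℝ (Fin 3) :=
  (WithLp.equiv 2 (Fin 3 → ℝ)).symm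
    (crossProduct (WithLp.equiv 2 (Fin 3 → ℝ) a) (WithLp.equiv 2 (Fin 3 → ℝ) b))

lemma inner_cross3_self (a b : EuclideanSpace ℝ (Fin 3)) : ⟪a, cross3 a b⟫ = 0 := by
  simp [cross3, PiLp.inner_apply, Fin.sum_univ_three, crossProduct]
  ring

theorem stmt_0 (d w : ℕ → EuclideanSpace ℝ (Fin 3)) (Δt : ℝ) (hΔt : 0 < Δt)
    (h : ∀ m : ℕ, (Δt)⁻¹ • (d (m + 1) - d m) =
      cross3 ((1 / 2 : ℝ) • (d m + d (m + 1))) (w m)) :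
    (∀ m : ℕ, ‖d m‖ = ‖d 0‖) ∧ (‖d 0‖ = 1 → ∀ m : ℕ, ‖d m‖ = 1) := by
  have key : ∀ m, ‖d (m + 1)‖ = ‖d m‖ := by
    intro m
    have hd : d (m + 1) - d m = Δt • cross3 ((1 / 2 : ℝ) • (d m + d (m + 1))) (w m) := by
      rw [← h m, smul_smul, mul_inv_cancel₀ hΔt.ne', one_smul]
    have h0 : ⟪d m + d (m + 1), d (m + 1) - d m⟫ = 0 := by
      have hc := inner_cross3_self ((1 / 2 : ℝ) • (d m + d (m + 1))) (w m)
      rw [real_inner_smul_left] at hc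
      rw [hd, real_inner_smul_right]
      have : ⟪d m + d (m + 1), cross3 ((1 / 2 : ℝ) • (d m + d (m + 1))) (w m)⟫ = 0 := by
        linarith
      rw [this, mul_zero]
    have expand : ⟪d m + d (m + 1), d (m + 1) - d m⟫ = ‖d (m + 1)‖ ^ 2 - ‖d m‖ ^ 2 := by
      rw [inner_add_left, inner_sub_right, inner_sub_right,
        real_inner_self_eq_norm_sq, real_inner_self_eq_norm_sq, real_inner_comm (d m)]
      ring
    have hsq : ‖d (m + 1)‖ ^ 2 = ‖d m‖ ^ 2 := by linarith [expand.symm.trans h0]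
    nlinarith [norm_nonneg (d (m + 1)), norm_nonneg (d m)]
  have main : ∀ m, ‖d m‖ = ‖d 0‖ := by
    intro m
    induction m with
    | zero => rfl
    | succ n ih => rw [key n, ih]
  exact ⟨main, fun h1 m => (main m).trans h1⟩
end

section
/- For any w ∈ ℝ³, Δt > 0, and d ∈ ℝ³, the vector d' := V(w) d (with V(w) as in the Cayley-type transform of the implicit midpoint rule) satisfies the implicit midpoint equation (d' - d)/Δt = ((d + d')/2) × w. Conversely, given d and w, the vector d' = V(w)d is the unique solution of this equation. -/
open RealInnerProductSpace

noncomputable def cayleyV (Δt : ℝ) (w v : EuclideanSpace ℝ (Fin 3)) :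
    EuclideanSpace ℝ (Fin 3) :=
  (1 + Δt ^ 2 / 4 * ‖w‖ ^ 2)⁻¹ •
    ((1 - Δt ^ 2 / 4 * ‖w‖ ^ 2) • v + (Δt ^ 2 / 2) • (⟪w, v⟫ • w) + Δt • cross3 v w)

lemma cross3_apply' (a b : EuclideanSpace ℝ (Fin 3)) (i : Fin 3) :
    cross3 a b i =
      ![a 1 * b 2 - a 2 * b 1, a 2 * b 0 - a 0 * b 2, a 0 * b 1 - a 1 * b 0] i := by
  have : cross3 a b i = (crossProduct (a : Fin 3 → ℝ) b) i := rfl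
  rw [this, cross_apply]

lemma cayleyV_apply' (Δt : ℝ) (w v : EuclideanSpace ℝ (Fin 3)) (i : Fin 3) :
    cayleyV Δt w v i =
      (1 + Δt ^ 2 / 4 * ‖w‖ ^ 2)⁻¹ *
        ((1 - Δt ^ 2 / 4 * ‖w‖ ^ 2) * v i + Δt ^ 2 / 2 * (⟪w, v⟫ * w i) +
          Δt * (![v 1 * w 2 - v 2 * w 1, v 2 * w 0 - v 0 * w 2,
                  v 0 * w 1 - v 1 * w 0] i)) := by
  rw [show cayleyV Δt w v i =
      (1 + Δt ^ 2 / 4 * ‖w‖ ^ 2)⁻¹ *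
        ((1 - Δt ^ 2 / 4 * ‖w‖ ^ 2) * v i + Δt ^ 2 / 2 * (⟪w, v⟫ * w i) +
          Δt * cross3 v w i) from rfl, cross3_apply']


set_option maxHeartbeats 1000000 in
lemma aux_first (Δt : ℝ) (hΔ : Δt ≠ 0) (w d c : EuclideanSpace ℝ (Fin 3))
    (hden : (1:ℝ) + Δt ^ 2 / 4 * (w 0 ^ 2 + w 1 ^ 2 + w 2 ^ 2) ≠ 0)
    (h0 : c 0 = (1 + Δt ^ 2 / 4 * (w 0 ^ 2 + w 1 ^ 2 + w 2 ^ 2))⁻¹ *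
        ((1 - Δt ^ 2 / 4 * (w 0 ^ 2 + w 1 ^ 2 + w 2 ^ 2)) * d 0 +
          Δt ^ 2 / 2 * ((w 0 * d 0 + w 1 * d 1 + w 2 * d 2) * w 0) +
          Δt * (d 1 * w 2 - d 2 * w 1)))
    (h1 : c 1 = (1 + Δt ^ 2 / 4 * (w 0 ^ 2 + w 1 ^ 2 + w 2 ^ 2))⁻¹ *
        ((1 - Δt ^ 2 / 4 * (w 0 ^ 2 + w 1 ^ 2 + w 2 ^ 2)) * d 1 +
          Δt ^ 2 / 2 * ((w 0 * d 0 + w 1 * d 1 + w 2 * d 2) * w 1) +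
          Δt * (d 2 * w 0 - d 0 * w 2)))
    (h2 : c 2 = (1 + Δt ^ 2 / 4 * (w 0 ^ 2 + w 1 ^ 2 + w 2 ^ 2))⁻¹ *
        ((1 - Δt ^ 2 / 4 * (w 0 ^ 2 + w 1 ^ 2 + w 2 ^ 2)) * d 2 +
          Δt ^ 2 / 2 * ((w 0 * d 0 + w 1 * d 1 + w 2 * d 2) * w 2) +
          Δt * (d 0 * w 1 - d 1 * w 0))) :
    Δt⁻¹ • (c - d) = cross3 ((1 / 2 : ℝ) • (d + c)) w := by
  have hmid : ∀ j : Fin 3, ((1 / 2 : ℝ) • (d + c)) j = 1 / 2 * (d j + c j) := fun _ => rfl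
  ext i
  have hL : (Δt⁻¹ • (c - d)) i = Δt⁻¹ * (c i - d i) := rfl
  rw [hL, cross3_apply']
  fin_cases i
  · show Δt⁻¹ * (c 0 - d 0) =
      ((1 / 2 : ℝ) • (d + c)) 1 * w 2 - ((1 / 2 : ℝ) • (d + c)) 2 * w 1
    rw [hmid, hmid, h0, h1, h2]
    field_simp
    ring
  · show Δt⁻¹ * (c 1 - d 1) =
      ((1 / 2 : ℝ) • (d + c)) 2 * w 0 - ((1 / 2 : ℝ) • (d + c)) 0 * w 2
    rw [hmid, hmid, h0, h1, h2]
    field_simp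
    ring
  · show Δt⁻¹ * (c 2 - d 2) =
      ((1 / 2 : ℝ) • (d + c)) 0 * w 1 - ((1 / 2 : ℝ) • (d + c)) 1 * w 0
    rw [hmid, hmid, h0, h1, h2]
    field_simp
    ring

set_option maxHeartbeats 1000000 in
/-- `d' = V(w) d` is the unique solution of the implicit midpoint equation
`(d' - d)/Δt = ((d + d')/2) × w`. -/
theorem stmt_9 (Δt : ℝ) (hΔt : 0 < Δt) (w d : EuclideanSpace ℝ (Fin 3)) :
    (Δt⁻¹ • (cayleyV Δt w d - d) = cross3 ((1 / 2 : ℝ) • (d + cayleyV Δt w d)) w) ∧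
    (∀ d' : EuclideanSpace ℝ (Fin 3),
      Δt⁻¹ • (d' - d) = cross3 ((1 / 2 : ℝ) • (d + d')) w → d' = cayleyV Δt w d) := by
  have hΔ : Δt ≠ 0 := ne_of_gt hΔt
  have hw2 : ‖w‖ ^ 2 = w 0 ^ 2 + w 1 ^ 2 + w 2 ^ 2 := by
    rw [EuclideanSpace.norm_eq, Real.sq_sqrt (Finset.sum_nonneg (fun i _ => sq_nonneg _))]
    simp [Fin.sum_univ_three]
  have hinner : ⟪w, d⟫ = w 0 * d 0 + w 1 * d 1 + w 2 * d 2 := by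
    simp [PiLp.inner_apply, Fin.sum_univ_three]
    ring
  have hden : (1 : ℝ) + Δt ^ 2 / 4 * (w 0 ^ 2 + w 1 ^ 2 + w 2 ^ 2) ≠ 0 := by
    rw [← hw2]; positivity
  have c0eq : cayleyV Δt w d 0 =
      (1 + Δt ^ 2 / 4 * (w 0 ^ 2 + w 1 ^ 2 + w 2 ^ 2))⁻¹ *
        ((1 - Δt ^ 2 / 4 * (w 0 ^ 2 + w 1 ^ 2 + w 2 ^ 2)) * d 0 +
          Δt ^ 2 / 2 * ((w 0 * d 0 + w 1 * d 1 + w 2 * d 2) * w 0) +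
          Δt * (d 1 * w 2 - d 2 * w 1)) := by
    rw [cayleyV_apply', hw2, hinner]; norm_num
  have c1eq : cayleyV Δt w d 1 =
      (1 + Δt ^ 2 / 4 * (w 0 ^ 2 + w 1 ^ 2 + w 2 ^ 2))⁻¹ *
        ((1 - Δt ^ 2 / 4 * (w 0 ^ 2 + w 1 ^ 2 + w 2 ^ 2)) * d 1 +
          Δt ^ 2 / 2 * ((w 0 * d 0 + w 1 * d 1 + w 2 * d 2) * w 1) +
          Δt * (d 2 * w 0 - d 0 * w 2)) := by
    rw [cayleyV_apply', hw2, hinner]; norm_num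
  have c2eq : cayleyV Δt w d 2 =
      (1 + Δt ^ 2 / 4 * (w 0 ^ 2 + w 1 ^ 2 + w 2 ^ 2))⁻¹ *
        ((1 - Δt ^ 2 / 4 * (w 0 ^ 2 + w 1 ^ 2 + w 2 ^ 2)) * d 2 +
          Δt ^ 2 / 2 * ((w 0 * d 0 + w 1 * d 1 + w 2 * d 2) * w 2) +
          Δt * (d 0 * w 1 - d 1 * w 0)) := by
    rw [cayleyV_apply', hw2, hinner]; norm_num
    exact Or.inl (Or.inl rfl)
  have hfirst := aux_first Δt hΔ w d (cayleyV Δt w d) hden c0eq c1eq c2eq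
  refine ⟨hfirst, fun d' hd' => ?_⟩
  have compify : ∀ (x : EuclideanSpace ℝ (Fin 3)),
      Δt⁻¹ • (x - d) = cross3 ((1 / 2 : ℝ) • (d + x)) w →
      (Δt⁻¹ * (x 0 - d 0) = 1 / 2 * (d 1 + x 1) * w 2 - 1 / 2 * (d 2 + x 2) * w 1) ∧
      (Δt⁻¹ * (x 1 - d 1) = 1 / 2 * (d 2 + x 2) * w 0 - 1 / 2 * (d 0 + x 0) * w 2) ∧
      (Δt⁻¹ * (x 2 - d 2) = 1 / 2 * (d 0 + x 0) * w 1 - 1 / 2 * (d 1 + x 1) * w 0) := by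
    intro x hx
    have hmid : ∀ j : Fin 3, ((1 / 2 : ℝ) • (d + x)) j = 1 / 2 * (d j + x j) := fun _ => rfl
    refine ⟨?_, ?_, ?_⟩
    · have := congrFun (congrArg WithLp.ofLp hx) 0
      rw [show (Δt⁻¹ • (x - d)) 0 = Δt⁻¹ * (x 0 - d 0) from rfl, cross3_apply'] at this
      rw [this]
      show ((1 / 2 : ℝ) • (d + x)) 1 * w 2 - ((1 / 2 : ℝ) • (d + x)) 2 * w 1 = _
      rw [hmid, hmid]
    · have := congrFun (congrArg WithLp.ofLp hx) 1
      rw [show (Δt⁻¹ • (x - d)) 1 = Δt⁻¹ * (x 1 - d 1) from rfl, cross3_apply'] at this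
      rw [this]
      show ((1 / 2 : ℝ) • (d + x)) 2 * w 0 - ((1 / 2 : ℝ) • (d + x)) 0 * w 2 = _
      rw [hmid, hmid]
    · have := congrFun (congrArg WithLp.ofLp hx) 2
      rw [show (Δt⁻¹ • (x - d)) 2 = Δt⁻¹ * (x 2 - d 2) from rfl, cross3_apply'] at this
      rw [this]
      show ((1 / 2 : ℝ) • (d + x)) 0 * w 1 - ((1 / 2 : ℝ) • (d + x)) 1 * w 0 = _
      rw [hmid, hmid]
  obtain ⟨h0, h1, h2⟩ := compify d' hd'
  obtain ⟨g0, g1, g2⟩ := compify (cayleyV Δt w d) hfirst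
  obtain ⟨c, hc⟩ : ∃ c, cayleyV Δt w d = c := ⟨_, rfl⟩
  rw [hc] at g0 g1 g2 ⊢
  have k0 : d' 0 - c 0 = Δt * (1 / 2 * (d' 1 - c 1) * w 2 - 1 / 2 * (d' 2 - c 2) * w 1) := by
    field_simp at h0 g0; linarith [h0, g0]
  have k1 : d' 1 - c 1 = Δt * (1 / 2 * (d' 2 - c 2) * w 0 - 1 / 2 * (d' 0 - c 0) * w 2) := by
    field_simp at h1 g1; linarith [h1, g1]
  have k2 : d' 2 - c 2 = Δt * (1 / 2 * (d' 0 - c 0) * w 1 - 1 / 2 * (d' 1 - c 1) * w 0) := by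
    field_simp at h2 g2; linarith [h2, g2]
  have hsum : (d' 0 - c 0) ^ 2 + (d' 1 - c 1) ^ 2 + (d' 2 - c 2) ^ 2 = 0 := by
    linear_combination (d' 0 - c 0) * k0 + (d' 1 - c 1) * k1 + (d' 2 - c 2) * k2
  have sqz : ∀ a b c : ℝ, a ^ 2 + b ^ 2 + c ^ 2 = 0 → a = 0 := by
    intro a b c h
    have ha : a ^ 2 = 0 := le_antisymm (by nlinarith [sq_nonneg b, sq_nonneg c]) (sq_nonneg a)
    exact pow_eq_zero_iff two_ne_zero |>.mp ha
  have e0 : d' 0 = c 0 := sub_eq_zero.mp (sqz _ _ _ hsum)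
  have e1 : d' 1 = c 1 := sub_eq_zero.mp
    (sqz (d' 1 - c 1) (d' 0 - c 0) (d' 2 - c 2) (by linarith [hsum]))
  have e2 : d' 2 = c 2 := sub_eq_zero.mp
    (sqz (d' 2 - c 2) (d' 0 - c 0) (d' 1 - c 1) (by linarith [hsum]))
  ext i
  fin_cases i
  · exact e0
  · exact e1
  · exact e2
end

section
/- Lipschitz dependence of the midpoint rotation on angular velocity: there exists a constant C > 0 (independent of Δt) such that for all w¹, w² ∈ ℝ³ with the Cayley transform V defined via time step Δt > 0, and all unit vectors d ∈ ℝ³, one has |V(w¹) d - V(w²) d| ≤ C Δt |w¹ - w²|. -/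
open RealInnerProductSpace
lemma norm_sq_sum (a : EuclideanSpace ℝ (Fin 3)) :
    ‖a‖ ^ 2 = a 0 * a 0 + a 1 * a 1 + a 2 * a 2 := by
  rw [← real_inner_self_eq_norm_sq]
  simp only [PiLp.inner_apply, Fin.sum_univ_three, RCLike.inner_apply, conj_trivial]

lemma inner_three (a b : EuclideanSpace ℝ (Fin 3)) :
    ⟪a, b⟫ = a 0 * b 0 + a 1 * b 1 + a 2 * b 2 := by
  simp [PiLp.inner_apply, Fin.sum_univ_three]
  ring

lemma cross3_smul_left (c : ℝ) (a b : EuclideanSpace ℝ (Fin 3)) :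
    cross3 (c • a) b = c • cross3 a b := by
  ext i
  fin_cases i <;> simp [cross3, cross_apply]

lemma norm_cross3_le (a b : EuclideanSpace ℝ (Fin 3)) :
    ‖cross3 a b‖ ≤ ‖a‖ * ‖b‖ := by
  have h : ‖cross3 a b‖ ^ 2 + ⟪a, b⟫ ^ 2 = (‖a‖ * ‖b‖) ^ 2 := by
    rw [norm_sq_sum, inner_three, mul_pow, norm_sq_sum, norm_sq_sum]
    simp [cross3, cross_apply]
    ring
  nlinarith [norm_nonneg (cross3 a b), mul_nonneg (norm_nonneg a) (norm_nonneg b), sq_nonneg (⟪a, b⟫ : ℝ)]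

lemma cross3_c0 (a b : EuclideanSpace ℝ (Fin 3)) :
    cross3 a b 0 = a 1 * b 2 - a 2 * b 1 := by simp [cross3, cross_apply]

lemma cross3_c1 (a b : EuclideanSpace ℝ (Fin 3)) :
    cross3 a b 1 = a 2 * b 0 - a 0 * b 2 := by simp [cross3, cross_apply]

lemma cross3_c2 (a b : EuclideanSpace ℝ (Fin 3)) :
    cross3 a b 2 = a 0 * b 1 - a 1 * b 0 := by simp [cross3, cross_apply]

lemma key (Δt : ℝ) (w d : EuclideanSpace ℝ (Fin 3)) :
    cayleyV Δt w d - (Δt / 2) • cross3 (cayleyV Δt w d) w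
      = d + (Δt / 2) • cross3 d w := by
  set α : ℝ := 1 + Δt ^ 2 / 4 * ‖w‖ ^ 2 with hα
  have hαpos : 0 < α := by positivity
  set X : EuclideanSpace ℝ (Fin 3) :=
    (1 - Δt ^ 2 / 4 * ‖w‖ ^ 2) • d + (Δt ^ 2 / 2) • (⟪w, d⟫ • w) + Δt • cross3 d w with hX
  have hmain : X - (Δt / 2) • cross3 X w = α • (d + (Δt / 2) • cross3 d w) := by
    have hw := norm_sq_sum w
    have hwd := inner_three w d
    ext i
    fin_cases i <;>
      · simp [hX, hα, hw, hwd, cross3_c0, cross3_c1, cross3_c2]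
        ring
  have hu : cayleyV Δt w d = α⁻¹ • X := rfl
  rw [hu, cross3_smul_left, smul_comm, ← smul_sub, hmain, smul_smul,
    inv_mul_cancel₀ hαpos.ne', one_smul]

lemma cross3_sub_left (a b c : EuclideanSpace ℝ (Fin 3)) :
    cross3 (a - b) c = cross3 a c - cross3 b c := by
  ext i
  fin_cases i <;> · simp [cross3_c0, cross3_c1, cross3_c2]; ring

lemma cross3_sub_right (a b c : EuclideanSpace ℝ (Fin 3)) :
    cross3 a (b - c) = cross3 a b - cross3 a c := by
  ext i
  fin_cases i <;> · simp [cross3_c0, cross3_c1, cross3_c2]; ring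

lemma inner_cross3_left (a b : EuclideanSpace ℝ (Fin 3)) :
    ⟪cross3 a b, a⟫ = 0 := by
  rw [inner_three]
  simp [cross3_c0, cross3_c1, cross3_c2]
  ring

lemma norm_cayleyV_le (Δt : ℝ) (hΔt : 0 < Δt) (w d : EuclideanSpace ℝ (Fin 3))
    (hd : ‖d‖ = 1) : ‖cayleyV Δt w d‖ ≤ 4 := by
  have hs : (0:ℝ) ≤ Δt ^ 2 / 4 * ‖w‖ ^ 2 := by positivity
  set s : ℝ := Δt ^ 2 / 4 * ‖w‖ ^ 2 with hsdef
  have hαpos : (0:ℝ) < 1 + s := by linarith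
  have h2 : |⟪w, d⟫| ≤ ‖w‖ := by
    have := abs_real_inner_le_norm w d
    rwa [hd, mul_one] at this
  have h3 : ‖cross3 d w‖ ≤ ‖w‖ := by
    have := norm_cross3_le d w
    rwa [hd, one_mul] at this
  have h4 : Δt * ‖w‖ ≤ 1 + s := by
    rw [hsdef]
    nlinarith [sq_nonneg (Δt * ‖w‖ - 2)]
  have hB : ‖(1 - s) • d + (Δt ^ 2 / 2) • (⟪w, d⟫ • w) + Δt • cross3 d w‖
      ≤ |1 - s| + Δt ^ 2 / 2 * (|⟪w, d⟫| * ‖w‖) + Δt * ‖cross3 d w‖ := by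
    refine le_trans (norm_add₃_le) ?_
    rw [norm_smul, norm_smul, norm_smul, norm_smul, hd, mul_one]
    simp [Real.norm_eq_abs, abs_of_pos hΔt,
      abs_of_nonneg (show (0:ℝ) ≤ Δt ^ 2 / 2 by positivity)]
  have hBval : |1 - s| + Δt ^ 2 / 2 * (|⟪w, d⟫| * ‖w‖) + Δt * ‖cross3 d w‖ ≤ 4 * (1 + s) := by
    have h1 : |1 - s| ≤ 1 + s := by
      rw [abs_le]; constructor <;> linarith
    have h2' : Δt ^ 2 / 2 * (|⟪w, d⟫| * ‖w‖) ≤ 2 * s := by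
      have hww : |⟪w, d⟫| * ‖w‖ ≤ ‖w‖ * ‖w‖ := mul_le_mul_of_nonneg_right h2 (norm_nonneg w)
      rw [hsdef]
      nlinarith [hww, sq_nonneg Δt, mul_nonneg (mul_nonneg (le_of_lt (mul_pos hΔt hΔt)) (abs_nonneg (⟪w, d⟫ : ℝ))) (norm_nonneg w)]
    have h3' : Δt * ‖cross3 d w‖ ≤ 1 + s := le_trans (by nlinarith [norm_nonneg (cross3 d w)]) h4
    linarith
  rw [cayleyV, norm_smul, Real.norm_eq_abs,
    abs_of_pos (show (0:ℝ) < (1 + Δt ^ 2 / 4 * ‖w‖ ^ 2)⁻¹ by positivity), ← hsdef,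
    inv_mul_le_iff₀ hαpos]
  linarith [le_trans hB hBval]

/-- Lipschitz dependence of the midpoint rotation on the angular velocity,
uniformly in the time step. -/
theorem stmt_10 :
    ∃ C > (0 : ℝ), ∀ Δt > (0 : ℝ), ∀ w₁ w₂ d : EuclideanSpace ℝ (Fin 3), ‖d‖ = 1 →
      ‖cayleyV Δt w₁ d - cayleyV Δt w₂ d‖ ≤ C * Δt * ‖w₁ - w₂‖ := by
  refine ⟨4, by norm_num, ?_⟩
  intro Δt hΔt w₁ w₂ d hd
  set u₁ := cayleyV Δt w₁ d with hu₁
  set u₂ := cayleyV Δt w₂ d with hu₂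
  set e := w₁ - w₂ with he
  set δ := u₁ - u₂ with hδdef
  have k₁ := key Δt w₁ d
  have k₂ := key Δt w₂ d
  have h12 : (u₁ - (Δt / 2) • cross3 u₁ w₁) - (u₂ - (Δt / 2) • cross3 u₂ w₂)
      = (d + (Δt / 2) • cross3 d w₁) - (d + (Δt / 2) • cross3 d w₂) := by
    rw [k₁, k₂]
  have hδ : δ = (Δt / 2) • (cross3 δ w₁ + cross3 u₂ e + cross3 d e) := by
    rw [hδdef, he, cross3_sub_left, cross3_sub_right, cross3_sub_right]
    linear_combination (norm := module) h12
  have h0 : ⟪cross3 δ w₁, δ⟫ = 0 := inner_cross3_left δ w₁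
  have hns : ‖δ‖ ^ 2 = Δt / 2 * (⟪cross3 δ w₁, δ⟫ + ⟪cross3 u₂ e, δ⟫ + ⟪cross3 d e, δ⟫) := by
    rw [← real_inner_self_eq_norm_sq]
    nth_rewrite 1 [hδ]
    rw [real_inner_smul_left, inner_add_left, inner_add_left]
  have hu2n : ‖u₂‖ ≤ 4 := norm_cayleyV_le Δt hΔt w₂ d hd
  have hb1 : ⟪cross3 u₂ e, δ⟫ ≤ 4 * ‖e‖ * ‖δ‖ := by
    calc ⟪cross3 u₂ e, δ⟫ ≤ ‖cross3 u₂ e‖ * ‖δ‖ := real_inner_le_norm _ _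
      _ ≤ (‖u₂‖ * ‖e‖) * ‖δ‖ := by gcongr; exact norm_cross3_le _ _
      _ ≤ 4 * ‖e‖ * ‖δ‖ := by
          nlinarith [mul_le_mul_of_nonneg_right hu2n
            (mul_nonneg (norm_nonneg e) (norm_nonneg δ))]
  have hb2 : ⟪cross3 d e, δ⟫ ≤ ‖e‖ * ‖δ‖ := by
    calc ⟪cross3 d e, δ⟫ ≤ ‖cross3 d e‖ * ‖δ‖ := real_inner_le_norm _ _
      _ ≤ (‖d‖ * ‖e‖) * ‖δ‖ := by gcongr; exact norm_cross3_le _ _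
      _ = ‖e‖ * ‖δ‖ := by rw [hd, one_mul]
  have hsq : ‖δ‖ ^ 2 ≤ 4 * Δt * ‖e‖ * ‖δ‖ := by
    rw [hns, h0]
    have := norm_nonneg e; have := norm_nonneg δ
    nlinarith
  rcases eq_or_lt_of_le (norm_nonneg δ) with h | h
  · have hpos : (0:ℝ) ≤ 4 * Δt * ‖e‖ := by positivity
    linarith
  · nlinarith [hsq, h, mul_pos h h]
end

section
/- Difference estimate for solutions of perturbed anisotropic elliptic bilinear identities: let ε₂ > -1, Ω ⊂ ℝⁿ bounded, and suppose φ¹, φ² ∈ H¹(Ω) with φ¹ - φ² ∈ H¹₀(Ω) satisfy a₁(φ¹, ψ) = a₂(φ², ψ) = F(ψ) for all ψ ∈ H¹₀(Ω), where aᵢ(u, v) = ∫_Ω [∇u · ∇v + ε₂ (dⁱ · ∇u)(dⁱ · ∇v)] dx with measurable dⁱ satisfying |dⁱ| ≤ 1 a.e. and ∇φⁱ ∈ L^∞(Ω). Then ‖∇φ¹ - ∇φ²‖_{L²(Ω)} ≤ C(ε₂) ‖d¹ - d²‖_{L²(Ω)} (‖∇φ¹‖_{L^∞} + ‖∇φ²‖_{L^∞}),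 where C(ε₂) depends only on ε₂. -/
open MeasureTheory RealInnerProductSpace

set_option maxHeartbeats 1000000 in
/-- Difference estimate for solutions of perturbed anisotropic elliptic bilinear
identities, stated in terms of the gradients `Dφ₁, Dφ₂` of the two solutions.
`TestGrad` is the set of gradients of admissible `H¹₀(Ω)` test functions; it
contains the gradient of the difference `φ¹ - φ² ∈ H¹₀(Ω)`. -/
theorem stmt_16 (ε₂ : ℝ) (hε₂ : -1 < ε₂) :
    ∃ C > (0 : ℝ), ∀ (n : ℕ) (Ω : Set (EuclideanSpace ℝ (Fin n))),
      MeasurableSet Ω → Bornology.IsBounded Ω →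
      ∀ (d₁ d₂ Dφ₁ Dφ₂ : EuclideanSpace ℝ (Fin n) → EuclideanSpace ℝ (Fin n))
        (K₁ K₂ : ℝ)
        (TestGrad : Set (EuclideanSpace ℝ (Fin n) → EuclideanSpace ℝ (Fin n)))
        (F : (EuclideanSpace ℝ (Fin n) → EuclideanSpace ℝ (Fin n)) → ℝ),
        Measurable d₁ → Measurable d₂ → Measurable Dφ₁ → Measurable Dφ₂ →
        (∀ᵐ x ∂(volume.restrict Ω), ‖d₁ x‖ ≤ 1) →
        (∀ᵐ x ∂(volume.restrict Ω), ‖d₂ x‖ ≤ 1) →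
        (∀ᵐ x ∂(volume.restrict Ω), ‖Dφ₁ x‖ ≤ K₁) →
        (∀ᵐ x ∂(volume.restrict Ω), ‖Dφ₂ x‖ ≤ K₂) →
        (fun x => Dφ₁ x - Dφ₂ x) ∈ TestGrad →
        (∀ Dψ ∈ TestGrad,
          (∫ x, (⟪Dφ₁ x, Dψ x⟫ + ε₂ * ⟪d₁ x, Dφ₁ x⟫ * ⟪d₁ x, Dψ x⟫)
              ∂(volume.restrict Ω)) = F Dψ) →
        (∀ Dψ ∈ TestGrad,
          (∫ x, (⟪Dφ₂ x, Dψ x⟫ + ε₂ * ⟪d₂ x, Dφ₂ x⟫ * ⟪d₂ x, Dψ x⟫)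
              ∂(volume.restrict Ω)) = F Dψ) →
        Real.sqrt (∫ x, ‖Dφ₁ x - Dφ₂ x‖ ^ 2 ∂(volume.restrict Ω)) ≤
          C * Real.sqrt (∫ x, ‖d₁ x - d₂ x‖ ^ 2 ∂(volume.restrict Ω)) * (K₁ + K₂) := by
  have hm : (0:ℝ) < min 1 (1+ε₂) := lt_min one_pos (by linarith)
  set m : ℝ := min 1 (1+ε₂) with hmdef
  refine ⟨2*(|ε₂|+1)/m + 1, by positivity, ?_⟩
  set C : ℝ := 2*(|ε₂|+1)/m + 1 with hCdef
  intro n Ω hΩm hΩb d₁ d₂ Dφ₁ Dφ₂ K₁ K₂ TestGrad F hd₁ hd₂ hDφ₁ hDφ₂ hbd₁ hbd₂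
    hbK₁ hbK₂ heT hid1 hid2
  set μ : Measure (EuclideanSpace ℝ (Fin n)) := volume.restrict Ω with hμdef
  haveI : IsFiniteMeasure μ :=
    ⟨by rw [hμdef, Measure.restrict_apply_univ]; exact hΩb.measure_lt_top⟩
  have hC0 : (0:ℝ) < C := by positivity
  by_cases hμ0 : μ = 0
  · simp [hμ0]
  haveI : (ae μ).NeBot := ae_neBot.mpr hμ0
  have hK₁0 : 0 ≤ K₁ := by
    obtain ⟨x, hx⟩ := hbK₁.exists; exact (norm_nonneg _).trans hx
  have hK₂0 : 0 ≤ K₂ := by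
    obtain ⟨x, hx⟩ := hbK₂.exists; exact (norm_nonneg _).trans hx
  set S : ℝ := K₁ + K₂ with hSdef
  have hS0 : 0 ≤ S := by positivity
  -- a.e. bound for the difference of gradients
  have hbe : ∀ᵐ x ∂μ, ‖Dφ₁ x - Dφ₂ x‖ ≤ S := by
    filter_upwards [hbK₁, hbK₂] with x h1 h2
    exact (norm_sub_le _ _).trans (add_le_add h1 h2)
  -- helper: bounded measurable functions are integrable
  have bdd_int : ∀ (f : EuclideanSpace ℝ (Fin n) → ℝ) (B : ℝ), Measurable f →
      (∀ᵐ x ∂μ, |f x| ≤ B) → Integrable f μ := fun f B hf hb =>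
    (integrable_const B).mono' hf.aestronglyMeasurable
      (by simpa [Real.norm_eq_abs] using hb)
  -- helper: inner product bound
  have inner_bd : ∀ (u v : EuclideanSpace ℝ (Fin n)) (a b : ℝ), ‖u‖ ≤ a → ‖v‖ ≤ b →
      0 ≤ a → |⟪u, v⟫| ≤ a * b := fun u v a b hu hv ha =>
    (abs_real_inner_le_norm u v).trans (mul_le_mul hu hv (norm_nonneg _) ha)
  -- measurable auxiliary functions
  have me : Measurable fun x => Dφ₁ x - Dφ₂ x := hDφ₁.sub hDφ₂
  -- Integrability of all the pieces
  have I_e2 : Integrable (fun x => ‖Dφ₁ x - Dφ₂ x‖ ^ 2) μ := by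
    refine bdd_int _ (S^2) (me.norm.pow_const 2) ?_
    filter_upwards [hbe] with x hx
    rw [abs_of_nonneg (by positivity)]
    exact pow_le_pow_left₀ (norm_nonneg _) hx 2
  have I_t1 : Integrable (fun x => ⟪d₁ x, Dφ₁ x - Dφ₂ x⟫ ^ 2) μ := by
    refine bdd_int _ ((1*S)^2) ((hd₁.inner me).pow_const 2) ?_
    filter_upwards [hbd₁, hbe] with x h1 h2
    rw [abs_of_nonneg (by positivity)]
    have h := inner_bd (d₁ x) (Dφ₁ x - Dφ₂ x) 1 S h1 h2 zero_le_one
    nlinarith [abs_nonneg (⟪d₁ x, Dφ₁ x - Dφ₂ x⟫), sq_abs (⟪d₁ x, Dφ₁ x - Dφ₂ x⟫)]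
  have I_g : Integrable (fun x => ‖Dφ₁ x - Dφ₂ x‖ ^ 2
      + ε₂ * ⟪d₁ x, Dφ₁ x - Dφ₂ x⟫ ^ 2) μ := I_e2.add (I_t1.const_mul ε₂)
  have I_r : Integrable (fun x => ε₂ * (⟪d₁ x, Dφ₂ x⟫ * ⟪d₁ x, Dφ₁ x - Dφ₂ x⟫
      - ⟪d₂ x, Dφ₂ x⟫ * ⟪d₂ x, Dφ₁ x - Dφ₂ x⟫)) μ := by
    refine bdd_int _ (|ε₂| * (K₂*S + K₂*S))
      (((hd₁.inner hDφ₂).mul (hd₁.inner me)).sub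
        ((hd₂.inner hDφ₂).mul (hd₂.inner me)) |>.const_mul ε₂) ?_
    filter_upwards [hbd₁, hbd₂, hbK₂, hbe] with x h1 h2 h3 h4
    have b1 := inner_bd (d₁ x) (Dφ₂ x) 1 K₂ h1 h3 zero_le_one
    have b2 := inner_bd (d₁ x) (Dφ₁ x - Dφ₂ x) 1 S h1 h4 zero_le_one
    have b3 := inner_bd (d₂ x) (Dφ₂ x) 1 K₂ h2 h3 zero_le_one
    have b4 := inner_bd (d₂ x) (Dφ₁ x - Dφ₂ x) 1 S h2 h4 zero_le_one
    rw [one_mul] at b1 b2 b3 b4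
    rw [abs_mul]
    have hsub : |⟪d₁ x, Dφ₂ x⟫ * ⟪d₁ x, Dφ₁ x - Dφ₂ x⟫
        - ⟪d₂ x, Dφ₂ x⟫ * ⟪d₂ x, Dφ₁ x - Dφ₂ x⟫| ≤ K₂*S + K₂*S := by
      refine (abs_sub _ _).trans ?_
      rw [abs_mul, abs_mul]
      have p1 : |⟪d₁ x, Dφ₂ x⟫| * |⟪d₁ x, Dφ₁ x - Dφ₂ x⟫| ≤ K₂ * S :=
        mul_le_mul b1 b2 (abs_nonneg _) hK₂0
      have p2 : |⟪d₂ x, Dφ₂ x⟫| * |⟪d₂ x, Dφ₁ x - Dφ₂ x⟫| ≤ K₂ * S :=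
        mul_le_mul b3 b4 (abs_nonneg _) hK₂0
      linarith
    exact mul_le_mul_of_nonneg_left hsub (abs_nonneg _)
  have I_f1 : Integrable (fun x => ⟪Dφ₁ x, Dφ₁ x - Dφ₂ x⟫
      + ε₂ * ⟪d₁ x, Dφ₁ x⟫ * ⟪d₁ x, Dφ₁ x - Dφ₂ x⟫) μ := by
    refine bdd_int _ (K₁*S + |ε₂| * (K₁*S))
      ((hDφ₁.inner me).add (((hd₁.inner hDφ₁).const_mul ε₂).mul (hd₁.inner me))) ?_
    filter_upwards [hbd₁, hbK₁, hbe] with x h1 h2 h3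
    have b1 := inner_bd (Dφ₁ x) (Dφ₁ x - Dφ₂ x) K₁ S h2 h3 hK₁0
    have b2 := inner_bd (d₁ x) (Dφ₁ x) 1 K₁ h1 h2 zero_le_one
    have b3 := inner_bd (d₁ x) (Dφ₁ x - Dφ₂ x) 1 S h1 h3 zero_le_one
    rw [one_mul] at b2 b3
    refine (abs_add_le _ _).trans ?_
    rw [abs_mul, abs_mul]
    have p : |⟪d₁ x, Dφ₁ x⟫| * |⟪d₁ x, Dφ₁ x - Dφ₂ x⟫| ≤ K₁ * S :=
      mul_le_mul b2 b3 (abs_nonneg _) hK₁0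
    nlinarith [abs_nonneg ε₂, abs_nonneg (⟪d₁ x, Dφ₁ x⟫),
      abs_nonneg (⟪d₁ x, Dφ₁ x - Dφ₂ x⟫)]
  have I_f2 : Integrable (fun x => ⟪Dφ₂ x, Dφ₁ x - Dφ₂ x⟫
      + ε₂ * ⟪d₂ x, Dφ₂ x⟫ * ⟪d₂ x, Dφ₁ x - Dφ₂ x⟫) μ := by
    refine bdd_int _ (K₂*S + |ε₂| * (K₂*S))
      ((hDφ₂.inner me).add (((hd₂.inner hDφ₂).const_mul ε₂).mul (hd₂.inner me))) ?_
    filter_upwards [hbd₂, hbK₂, hbe] with x h1 h2 h3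
    have b1 := inner_bd (Dφ₂ x) (Dφ₁ x - Dφ₂ x) K₂ S h2 h3 hK₂0
    have b2 := inner_bd (d₂ x) (Dφ₂ x) 1 K₂ h1 h2 zero_le_one
    have b3 := inner_bd (d₂ x) (Dφ₁ x - Dφ₂ x) 1 S h1 h3 zero_le_one
    rw [one_mul] at b2 b3
    refine (abs_add_le _ _).trans ?_
    rw [abs_mul, abs_mul]
    have p : |⟪d₂ x, Dφ₂ x⟫| * |⟪d₂ x, Dφ₁ x - Dφ₂ x⟫| ≤ K₂ * S :=
      mul_le_mul b2 b3 (abs_nonneg _) hK₂0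
    nlinarith [abs_nonneg ε₂, abs_nonneg (⟪d₂ x, Dφ₂ x⟫),
      abs_nonneg (⟪d₂ x, Dφ₁ x - Dφ₂ x⟫)]
  have I_prod : Integrable (fun x => ‖d₁ x - d₂ x‖ * ‖Dφ₁ x - Dφ₂ x‖) μ := by
    refine bdd_int _ (2 * S) ((hd₁.sub hd₂).norm.mul me.norm) ?_
    filter_upwards [hbd₁, hbd₂, hbe] with x h1 h2 h3
    rw [abs_of_nonneg (by positivity)]
    exact mul_le_mul ((norm_sub_le _ _).trans (by linarith)) h3 (norm_nonneg _)
      (by norm_num)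
  -- the two identities give equal integrals
  have hI : (∫ x, (⟪Dφ₁ x, Dφ₁ x - Dφ₂ x⟫
        + ε₂ * ⟪d₁ x, Dφ₁ x⟫ * ⟪d₁ x, Dφ₁ x - Dφ₂ x⟫) ∂μ)
      = ∫ x, (⟪Dφ₂ x, Dφ₁ x - Dφ₂ x⟫
        + ε₂ * ⟪d₂ x, Dφ₂ x⟫ * ⟪d₂ x, Dφ₁ x - Dφ₂ x⟫) ∂μ := by
    rw [hid1 _ heT, hid2 _ heT]
  -- pointwise algebraic identity
  have hpt : ∀ x, (⟪Dφ₁ x, Dφ₁ x - Dφ₂ x⟫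
        + ε₂ * ⟪d₁ x, Dφ₁ x⟫ * ⟪d₁ x, Dφ₁ x - Dφ₂ x⟫)
      - (⟪Dφ₂ x, Dφ₁ x - Dφ₂ x⟫ + ε₂ * ⟪d₂ x, Dφ₂ x⟫ * ⟪d₂ x, Dφ₁ x - Dφ₂ x⟫)
      = (‖Dφ₁ x - Dφ₂ x‖ ^ 2 + ε₂ * ⟪d₁ x, Dφ₁ x - Dφ₂ x⟫ ^ 2)
        + ε₂ * (⟪d₁ x, Dφ₂ x⟫ * ⟪d₁ x, Dφ₁ x - Dφ₂ x⟫
          - ⟪d₂ x, Dφ₂ x⟫ * ⟪d₂ x, Dφ₁ x - Dφ₂ x⟫) := by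
    intro x
    have h1 : ⟪Dφ₁ x, Dφ₁ x - Dφ₂ x⟫ - ⟪Dφ₂ x, Dφ₁ x - Dφ₂ x⟫
        = ‖Dφ₁ x - Dφ₂ x‖ ^ 2 := by
      rw [← inner_sub_left]; exact real_inner_self_eq_norm_sq _
    have h2 : ⟪d₁ x, Dφ₁ x⟫ = ⟪d₁ x, Dφ₁ x - Dφ₂ x⟫ + ⟪d₁ x, Dφ₂ x⟫ := by
      rw [inner_sub_right]; ring
    rw [h2]; nlinarith [h1]
  -- combine: ∫ g = - ∫ r
  have hzero : (∫ x, ((‖Dφ₁ x - Dφ₂ x‖ ^ 2 + ε₂ * ⟪d₁ x, Dφ₁ x - Dφ₂ x⟫ ^ 2)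
      + ε₂ * (⟪d₁ x, Dφ₂ x⟫ * ⟪d₁ x, Dφ₁ x - Dφ₂ x⟫
        - ⟪d₂ x, Dφ₂ x⟫ * ⟪d₂ x, Dφ₁ x - Dφ₂ x⟫)) ∂μ) = 0 := by
    rw [show (fun x => ((‖Dφ₁ x - Dφ₂ x‖ ^ 2 + ε₂ * ⟪d₁ x, Dφ₁ x - Dφ₂ x⟫ ^ 2)
      + ε₂ * (⟪d₁ x, Dφ₂ x⟫ * ⟪d₁ x, Dφ₁ x - Dφ₂ x⟫
        - ⟪d₂ x, Dφ₂ x⟫ * ⟪d₂ x, Dφ₁ x - Dφ₂ x⟫)))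
      = fun x => (⟪Dφ₁ x, Dφ₁ x - Dφ₂ x⟫
        + ε₂ * ⟪d₁ x, Dφ₁ x⟫ * ⟪d₁ x, Dφ₁ x - Dφ₂ x⟫)
      - (⟪Dφ₂ x, Dφ₁ x - Dφ₂ x⟫ + ε₂ * ⟪d₂ x, Dφ₂ x⟫ * ⟪d₂ x, Dφ₁ x - Dφ₂ x⟫)
      from funext fun x => (hpt x).symm]
    rw [integral_sub I_f1 I_f2, hI, sub_self]
  have hsplit := integral_add I_g I_r
  have hg_eq : (∫ x, (‖Dφ₁ x - Dφ₂ x‖ ^ 2 + ε₂ * ⟪d₁ x, Dφ₁ x - Dφ₂ x⟫ ^ 2) ∂μ)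
      = - ∫ x, ε₂ * (⟪d₁ x, Dφ₂ x⟫ * ⟪d₁ x, Dφ₁ x - Dφ₂ x⟫
        - ⟪d₂ x, Dφ₂ x⟫ * ⟪d₂ x, Dφ₁ x - Dφ₂ x⟫) ∂μ := by
    rw [hsplit] at hzero; linarith
  -- coercivity
  have hcoer : m * (∫ x, ‖Dφ₁ x - Dφ₂ x‖ ^ 2 ∂μ)
      ≤ ∫ x, (‖Dφ₁ x - Dφ₂ x‖ ^ 2 + ε₂ * ⟪d₁ x, Dφ₁ x - Dφ₂ x⟫ ^ 2) ∂μ := by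
    rw [← integral_const_mul]
    refine integral_mono_ae (I_e2.const_mul m) I_g ?_
    filter_upwards [hbd₁] with x h1
    have hcs := inner_bd (d₁ x) (Dφ₁ x - Dφ₂ x) 1 ‖Dφ₁ x - Dφ₂ x‖ h1 le_rfl zero_le_one
    rw [one_mul] at hcs
    have ht : ⟪d₁ x, Dφ₁ x - Dφ₂ x⟫ ^ 2 ≤ ‖Dφ₁ x - Dφ₂ x‖ ^ 2 := by
      nlinarith [abs_nonneg (⟪d₁ x, Dφ₁ x - Dφ₂ x⟫), sq_abs (⟪d₁ x, Dφ₁ x - Dφ₂ x⟫),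
        norm_nonneg (Dφ₁ x - Dφ₂ x)]
    rcases le_or_gt 0 ε₂ with h | h
    · have hm1 : m ≤ 1 := min_le_left _ _
      nlinarith [sq_nonneg (⟪d₁ x, Dφ₁ x - Dφ₂ x⟫), sq_nonneg ‖Dφ₁ x - Dφ₂ x‖]
    · have hm1 : m ≤ 1 + ε₂ := min_le_right _ _
      nlinarith [sq_nonneg ‖Dφ₁ x - Dφ₂ x‖]
  -- bound on -r
  have hrb : (- ∫ x, ε₂ * (⟪d₁ x, Dφ₂ x⟫ * ⟪d₁ x, Dφ₁ x - Dφ₂ x⟫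
        - ⟪d₂ x, Dφ₂ x⟫ * ⟪d₂ x, Dφ₁ x - Dφ₂ x⟫) ∂μ)
      ≤ (|ε₂| * (2 * K₂)) * ∫ x, ‖d₁ x - d₂ x‖ * ‖Dφ₁ x - Dφ₂ x‖ ∂μ := by
    rw [← integral_neg, ← integral_const_mul]
    refine integral_mono_ae I_r.neg (I_prod.const_mul _) ?_
    filter_upwards [hbd₁, hbd₂, hbK₂, hbe] with x h1 h2 h3 h4
    have key : ⟪d₂ x, Dφ₂ x⟫ * ⟪d₂ x, Dφ₁ x - Dφ₂ x⟫
        - ⟪d₁ x, Dφ₂ x⟫ * ⟪d₁ x, Dφ₁ x - Dφ₂ x⟫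
        = ⟪d₂ x - d₁ x, Dφ₂ x⟫ * ⟪d₂ x, Dφ₁ x - Dφ₂ x⟫
          + ⟪d₁ x, Dφ₂ x⟫ * ⟪d₂ x - d₁ x, Dφ₁ x - Dφ₂ x⟫ := by
      simp only [inner_sub_left]; ring
    have hA : |⟪d₂ x - d₁ x, Dφ₂ x⟫| ≤ ‖d₁ x - d₂ x‖ * K₂ := by
      rw [show d₂ x - d₁ x = -(d₁ x - d₂ x) by abel, ← norm_neg (d₁ x - d₂ x)] at *
      exact inner_bd _ _ _ _ le_rfl h3 (norm_nonneg _)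
    have hB : |⟪d₂ x, Dφ₁ x - Dφ₂ x⟫| ≤ ‖Dφ₁ x - Dφ₂ x‖ := by
      have := inner_bd (d₂ x) (Dφ₁ x - Dφ₂ x) 1 ‖Dφ₁ x - Dφ₂ x‖ h2 le_rfl zero_le_one
      linarith [this, one_mul ‖Dφ₁ x - Dφ₂ x‖]
    have hCc : |⟪d₁ x, Dφ₂ x⟫| ≤ K₂ := by
      have := inner_bd (d₁ x) (Dφ₂ x) 1 K₂ h1 h3 zero_le_one
      linarith [this, one_mul K₂]
    have hD : |⟪d₂ x - d₁ x, Dφ₁ x - Dφ₂ x⟫| ≤ ‖d₁ x - d₂ x‖ * ‖Dφ₁ x - Dφ₂ x‖ := by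
      rw [show d₂ x - d₁ x = -(d₁ x - d₂ x) by abel, ← norm_neg (d₁ x - d₂ x)] at *
      exact inner_bd _ _ _ _ le_rfl le_rfl (norm_nonneg _)
    have heq : -(ε₂ * (⟪d₁ x, Dφ₂ x⟫ * ⟪d₁ x, Dφ₁ x - Dφ₂ x⟫
        - ⟪d₂ x, Dφ₂ x⟫ * ⟪d₂ x, Dφ₁ x - Dφ₂ x⟫))
        = ε₂ * (⟪d₂ x - d₁ x, Dφ₂ x⟫ * ⟪d₂ x, Dφ₁ x - Dφ₂ x⟫
          + ⟪d₁ x, Dφ₂ x⟫ * ⟪d₂ x - d₁ x, Dφ₁ x - Dφ₂ x⟫) := by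
      rw [← key]; ring
    rw [heq]
    calc ε₂ * (⟪d₂ x - d₁ x, Dφ₂ x⟫ * ⟪d₂ x, Dφ₁ x - Dφ₂ x⟫
          + ⟪d₁ x, Dφ₂ x⟫ * ⟪d₂ x - d₁ x, Dφ₁ x - Dφ₂ x⟫)
        ≤ |ε₂ * (⟪d₂ x - d₁ x, Dφ₂ x⟫ * ⟪d₂ x, Dφ₁ x - Dφ₂ x⟫
          + ⟪d₁ x, Dφ₂ x⟫ * ⟪d₂ x - d₁ x, Dφ₁ x - Dφ₂ x⟫)| := le_abs_self _
      _ ≤ |ε₂| * (|⟪d₂ x - d₁ x, Dφ₂ x⟫| * |⟪d₂ x, Dφ₁ x - Dφ₂ x⟫|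
          + |⟪d₁ x, Dφ₂ x⟫| * |⟪d₂ x - d₁ x, Dφ₁ x - Dφ₂ x⟫|) := by
          rw [abs_mul]
          refine mul_le_mul_of_nonneg_left ?_ (abs_nonneg _)
          refine (abs_add_le _ _).trans ?_
          rw [abs_mul, abs_mul]
      _ ≤ |ε₂| * (2 * K₂) * (‖d₁ x - d₂ x‖ * ‖Dφ₁ x - Dφ₂ x‖) := by
          have p1 : |⟪d₂ x - d₁ x, Dφ₂ x⟫| * |⟪d₂ x, Dφ₁ x - Dφ₂ x⟫|
              ≤ (‖d₁ x - d₂ x‖ * K₂) * ‖Dφ₁ x - Dφ₂ x‖ :=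
            mul_le_mul hA hB (abs_nonneg _) (by positivity)
          have p2 : |⟪d₁ x, Dφ₂ x⟫| * |⟪d₂ x - d₁ x, Dφ₁ x - Dφ₂ x⟫|
              ≤ K₂ * (‖d₁ x - d₂ x‖ * ‖Dφ₁ x - Dφ₂ x‖) :=
            mul_le_mul hCc hD (abs_nonneg _) hK₂0
          nlinarith [abs_nonneg ε₂]
  -- Cauchy–Schwarz
  have hCS : (∫ x, ‖d₁ x - d₂ x‖ * ‖Dφ₁ x - Dφ₂ x‖ ∂μ)
      ≤ Real.sqrt (∫ x, ‖d₁ x - d₂ x‖ ^ 2 ∂μ)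
        * Real.sqrt (∫ x, ‖Dφ₁ x - Dφ₂ x‖ ^ 2 ∂μ) := by
    have hconj : (2:ℝ).HolderConjugate 2 := Real.HolderConjugate.two_two
    have hf : MemLp (fun x => ‖d₁ x - d₂ x‖) (ENNReal.ofReal 2) μ :=
      MemLp.of_bound (hd₁.sub hd₂).norm.aestronglyMeasurable 2
        (by filter_upwards [hbd₁, hbd₂] with x h1 h2
            rw [norm_norm]; exact (norm_sub_le _ _).trans (by linarith))
    have hg : MemLp (fun x => ‖Dφ₁ x - Dφ₂ x‖) (ENNReal.ofReal 2) μ :=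
      MemLp.of_bound me.norm.aestronglyMeasurable S
        (by filter_upwards [hbe] with x hx; rwa [norm_norm])
    have h := integral_mul_le_Lp_mul_Lq_of_nonneg hconj
      (Filter.Eventually.of_forall fun x => norm_nonneg _)
      (Filter.Eventually.of_forall fun x => norm_nonneg _) hf hg
    have hrw : ∀ (f : EuclideanSpace ℝ (Fin n) → ℝ),
        (∫ x, f x ^ (2:ℝ) ∂μ) = ∫ x, f x ^ (2:ℕ) ∂μ := by
      intro f
      refine integral_congr_ae (Filter.Eventually.of_forall fun x => ?_)
      norm_num [Real.rpow_natCast]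
    rw [hrw, hrw, ← Real.sqrt_eq_rpow, ← Real.sqrt_eq_rpow] at h
    simpa using h
  -- put everything together
  set a : ℝ := Real.sqrt (∫ x, ‖Dφ₁ x - Dφ₂ x‖ ^ 2 ∂μ) with hadef
  set b : ℝ := Real.sqrt (∫ x, ‖d₁ x - d₂ x‖ ^ 2 ∂μ) with hbdef
  have ha0 : 0 ≤ a := Real.sqrt_nonneg _
  have hb0 : 0 ≤ b := Real.sqrt_nonneg _
  have ha2 : a ^ 2 = ∫ x, ‖Dφ₁ x - Dφ₂ x‖ ^ 2 ∂μ :=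
    Real.sq_sqrt (integral_nonneg fun x => by positivity)
  have main : m * a ^ 2 ≤ (|ε₂| * (2 * K₂)) * (b * a) := by
    rw [ha2]
    calc m * (∫ x, ‖Dφ₁ x - Dφ₂ x‖ ^ 2 ∂μ)
        ≤ ∫ x, (‖Dφ₁ x - Dφ₂ x‖ ^ 2 + ε₂ * ⟪d₁ x, Dφ₁ x - Dφ₂ x⟫ ^ 2) ∂μ := hcoer
      _ = - ∫ x, ε₂ * (⟪d₁ x, Dφ₂ x⟫ * ⟪d₁ x, Dφ₁ x - Dφ₂ x⟫
          - ⟪d₂ x, Dφ₂ x⟫ * ⟪d₂ x, Dφ₁ x - Dφ₂ x⟫) ∂μ := hg_eq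
      _ ≤ (|ε₂| * (2 * K₂)) * ∫ x, ‖d₁ x - d₂ x‖ * ‖Dφ₁ x - Dφ₂ x‖ ∂μ := hrb
      _ ≤ (|ε₂| * (2 * K₂)) * (b * a) :=
          mul_le_mul_of_nonneg_left hCS (by positivity)
  -- final algebra
  show a ≤ C * b * (K₁ + K₂)
  rcases eq_or_lt_of_le ha0 with ha | ha
  · rw [← ha]; positivity
  · have h7 : m * a ≤ |ε₂| * (2 * K₂) * b := by
      have h8 : (m * a) * a ≤ (|ε₂| * (2 * K₂) * b) * a := by nlinarith [main]
      exact le_of_mul_le_mul_right h8 ha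
    have hmC : m * C = 2 * (|ε₂| + 1) + m := by
      rw [hCdef]; field_simp
    nlinarith [mul_nonneg hb0 hK₁0, mul_nonneg hb0 hK₂0, abs_nonneg ε₂,
      mul_nonneg (mul_nonneg (abs_nonneg ε₂) hb0) hK₁0,
      mul_nonneg hb0 (add_nonneg hK₁0 hK₂0)]
end
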